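/- arXiv:1907.07273 — 2 statements merged into one kernel-verified Lean document; each statement's English description precedes it below -/
import Mathlib

section
/- Let A be a real n×n matrix and Q a symmetric positive definite n×n matrix with AᵀQA - Q negative definite. Then for every initial state s₀ ∈ ℝⁿ, the sequence sₖ = A^k s₀ satisfies sₖᵀQsₖ → 0 as k → ∞, and hence sₖ → 0. -/
/-! The Lyapunov function `V s = sᵀ Q s` is nonnegative and drops at each step by
`sᵀ (Q - Aᵀ Q A) s ≥ c ‖s‖²`, where `c > 0` is the minimum of that positive definite form on the
compact unit sphere. So `V (sₖ)` decreases to a limit, its successive differences tend to `0`,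
hence so does `‖sₖ‖²`, and `V (sₖ) → 0` by continuity of `V`. -/

open Matrix Filter Topology

section QuadraticForm

variable {ι : Type*} [Fintype ι]

lemma Matrix.smul_dotProduct_mulVec_smul (M : Matrix ι ι ℝ) (a : ℝ) (x : ι → ℝ) :
    (a • x) ⬝ᵥ M *ᵥ (a • x) = a ^ 2 * (x ⬝ᵥ M *ᵥ x) := by
  rw [mulVec_smul, smul_dotProduct, dotProduct_smul, smul_eq_mul, smul_eq_mul]
  ring

lemma Matrix.mulVec_dotProduct_mulVec_mulVec (A Q : Matrix ι ι ℝ) (x : ι → ℝ) :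
    A *ᵥ x ⬝ᵥ Q *ᵥ (A *ᵥ x) = x ⬝ᵥ (Aᵀ * Q * A) *ᵥ x := by
  rw [mulVec_mulVec, dotProduct_mulVec, dotProduct_mulVec, ← vecMul_transpose, vecMul_vecMul,
    Matrix.mul_assoc]

lemma Matrix.PosDef.exists_pos_mul_sq_norm_le {P : Matrix ι ι ℝ} (hP : P.PosDef) :
    ∃ c > 0, ∀ x : ι → ℝ, c * ‖x‖ ^ 2 ≤ x ⬝ᵥ P *ᵥ x := by
  have hpos : ∀ u ∈ Metric.sphere (0 : ι → ℝ) 1, 0 < u ⬝ᵥ P *ᵥ u := fun u hu => by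
    simpa using hP.dotProduct_mulVec_pos (ne_zero_of_mem_unit_sphere ⟨u, hu⟩)
  obtain ⟨c, hc, hmin⟩ := (isCompact_sphere (0 : ι → ℝ) 1).exists_forall_le'
    (by fun_prop) hpos
  refine ⟨c, hc, fun x => ?_⟩
  rcases eq_or_ne x 0 with rfl | hx
  · simp
  have hnorm : ‖x‖ ≠ 0 := norm_ne_zero_iff.mpr hx
  have hunit : ‖x‖⁻¹ • x ∈ Metric.sphere (0 : ι → ℝ) 1 := by
    simp [norm_smul, hnorm]
  calc c * ‖x‖ ^ 2
      ≤ (‖x‖⁻¹ • x) ⬝ᵥ P *ᵥ (‖x‖⁻¹ • x) * ‖x‖ ^ 2 := by gcongr; exact hmin _ hunit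
    _ = x ⬝ᵥ P *ᵥ x := by
      rw [smul_dotProduct_mulVec_smul]
      field_simp

end QuadraticForm

lemma tendsto_nhds_zero_of_mul_sq_norm_le_sub_succ {E : Type*} [NormedAddCommGroup E]
    {s : ℕ → E} {V : ℕ → ℝ} {c : ℝ} (hV : ∀ k, 0 ≤ V k) (hc : 0 < c)
    (h : ∀ k, c * ‖s k‖ ^ 2 ≤ V k - V (k + 1)) :
    Tendsto s atTop (𝓝 0) := by
  have hanti : Antitone V := antitone_nat_of_succ_le fun k => by
    nlinarith [h k, sq_nonneg ‖s k‖]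
  have hlim := tendsto_atTop_ciInf hanti ⟨0, by rintro _ ⟨k, rfl⟩; exact hV k⟩
  have hdiff : Tendsto (fun k => V k - V (k + 1)) atTop (𝓝 0) := by
    simpa using hlim.sub (hlim.comp (tendsto_add_atTop_nat 1))
  have hsq : Tendsto (fun k => ‖s k‖ ^ 2) atTop (𝓝 0) := by
    refine squeeze_zero (fun k => by positivity) (fun k => ?_) (by simpa using hdiff.div_const c)
    rw [le_div_iff₀ hc, mul_comm]
    exact h k
  rw [tendsto_zero_iff_norm_tendsto_zero]
  simpa using hsq.sqrt

theorem discrete_lyapunov_convergence {n : ℕ} (A Q : Matrix (Fin n) (Fin n) ℝ)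
    (hQ : Q.PosDef) (h_dec : (Q - Aᵀ * Q * A).PosDef) :
    ∀ s0 : Fin n → ℝ,
      Tendsto (fun k : ℕ => ((A ^ k).mulVec s0) ⬝ᵥ Q.mulVec ((A ^ k).mulVec s0))
        atTop (nhds 0) ∧
      Tendsto (fun k : ℕ => (A ^ k).mulVec s0) atTop (nhds 0) := by
  intro s0
  set s : ℕ → Fin n → ℝ := fun k => (A ^ k) *ᵥ s0
  obtain ⟨c, hc, hcoercive⟩ := h_dec.exists_pos_mul_sq_norm_le
  have hdecrease : ∀ k, c * ‖s k‖ ^ 2 ≤ s k ⬝ᵥ Q *ᵥ s k - s (k + 1) ⬝ᵥ Q *ᵥ s (k + 1) := by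
    intro k
    have hstep : s (k + 1) = A *ᵥ s k := by simp only [s, pow_succ', mulVec_mulVec]
    rw [hstep, mulVec_dotProduct_mulVec_mulVec A Q (s k), ← dotProduct_sub, ← sub_mulVec]
    exact hcoercive _
  have hs : Tendsto s atTop (𝓝 0) :=
    tendsto_nhds_zero_of_mul_sq_norm_le_sub_succ
      (fun k => by simpa using hQ.posSemidef.dotProduct_mulVec_nonneg (s k)) hc hdecrease
  refine ⟨?_, hs⟩
  have hV : Continuous fun x : Fin n → ℝ => x ⬝ᵥ Q *ᵥ x := by fun_prop
  exact (hV.tendsto' 0 0 (by simp)).comp hs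
end

section
/- Let (S, T) be a transition system and suppose S₀ = ⋃ᵢ∈I Cᵢ is covered by finitely many regions, where for each i there is a policy function Pᵢ : S → S and an inductive invariant φᵢ ⊆ S satisfying: Cᵢ ⊆ φᵢ, φᵢ is Pᵢ-inductive, and φᵢ ∩ Sᵤ = ∅. Define the combined policy P(s) = Pⱼ(s) where j is the least index with s ∈ φⱼ (well-defined on ⋃ᵢ φᵢ). Then ⋃ᵢ φᵢ is an inductive invariant of the system under policy P, since if s ∈ φⱼ and j is least such, then P(s) = Pⱼ(s) ∈ φⱼ ⊆ ⋃ᵢ φᵢ. Hence no trajectory starting in S₀ under P reaches Sᵤ. -/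
theorem cegis_soundness {S : Type*} (m : ℕ) (S0 Su : Set S)
    (C φ : Fin m → Set S) (Psub : Fin m → S → S) (P : S → S)
    (h_cover : S0 = ⋃ i, C i)
    (h_Cφ : ∀ i, C i ⊆ φ i)
    (h_ind : ∀ i, ∀ s ∈ φ i, Psub i s ∈ φ i)
    (h_disj : ∀ i, φ i ∩ Su = ∅)
    (h_P : ∀ s (j : Fin m), s ∈ φ j → (∀ k, k < j → s ∉ φ k) → P s = Psub j s) :
    (∀ s ∈ ⋃ i, φ i, P s ∈ ⋃ i, φ i) ∧
    ∀ s0 ∈ S0, ∀ n : ℕ, P^[n] s0 ∉ Su := by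
  have key : ∀ s ∈ ⋃ i, φ i, P s ∈ ⋃ i, φ i := by
    intro s hs
    rw [Set.mem_iUnion] at hs
    obtain ⟨j, hj⟩ := hs
    obtain ⟨j0, hj0, hmin⟩ := wellFounded_lt.has_min {i : Fin m | s ∈ φ i} ⟨j, hj⟩
    have hmin' : ∀ k, k < j0 → s ∉ φ k := fun k hk hkφ => hmin k hkφ hk
    rw [h_P s j0 hj0 hmin']
    exact Set.mem_iUnion.mpr ⟨j0, h_ind j0 s hj0⟩
  refine ⟨key, ?_⟩
  intro s0 hs0 n
  have hs0' : s0 ∈ ⋃ i, φ i := by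
    rw [h_cover, Set.mem_iUnion] at hs0
    obtain ⟨i, hi⟩ := hs0
    exact Set.mem_iUnion.mpr ⟨i, h_Cφ i hi⟩
  have hinv : ∀ n, P^[n] s0 ∈ ⋃ i, φ i := by
    intro n
    induction n with
    | zero => simpa using hs0'
    | succ n ih => rw [Function.iterate_succ_apply']; exact key _ ih
  intro hu
  obtain ⟨i, hi⟩ := Set.mem_iUnion.mp (hinv n)
  exact Set.eq_empty_iff_forall_notMem.mp (h_disj i) _ ⟨hi, hu⟩
end
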